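/- Fix integers N ≥ L ≥ 1, ρ > 0 and α_1,…,α_L > 0. Define R_1(n | ñ; τ) = (Σ_ℓ α_ℓ τ_ℓ^{1/2} n_ℓ^{−ρ/2}) / (Σ_ℓ α_ℓ τ_ℓ^{1/2} ñ_ℓ^{−ρ/2}). Then min_{n ∈ Δ_N} max_{ñ ∈ Δ_N} sup_{τ ∈ T} R_1(n | ñ; τ) = ((N − L + 1)/⌊N/L⌋)^{ρ/2}, and the minimum is attained by the near-equal allocation n* having r = N − L⌊N/L⌋ coordinates equal to ⌊N/L⌋ + 1 and the remaining coordinates equal to ⌊N/L⌋. -/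
import Mathlib

open Real

/-- Feasible integer sample-size allocations of a total budget `N` to `L` strata. -/
def Delta (L N : ℕ) : Set (Fin L → ℕ) :=
  { nv | (∀ ℓ, 1 ≤ nv ℓ) ∧ ∑ ℓ, nv ℓ = N }

/-- The suboptimality ratio `R₁(n ∣ ñ; τ)` under the perfectly-correlated
(ansatz 1) error bound when stratum `ℓ` has variance `τ_ℓ n_ℓ^{-ρ}`. -/
noncomputable def R1 {L : ℕ} (α : Fin L → ℝ) (ρ : ℝ)
    (nv ntv : Fin L → ℕ) (τ : Fin L → ℝ) : ℝ :=
  (∑ ℓ, α ℓ * (τ ℓ) ^ ((1 : ℝ) / 2) * ((nv ℓ : ℝ)) ^ (-(ρ / 2))) /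
  (∑ ℓ, α ℓ * (τ ℓ) ^ ((1 : ℝ) / 2) * ((ntv ℓ : ℝ)) ^ (-(ρ / 2)))

/-- `sup_{τ ∈ T} R₁(n ∣ ñ; τ)`. -/
noncomputable def supTau1 {L : ℕ} (α : Fin L → ℝ) (ρ : ℝ) (nv ntv : Fin L → ℕ) : ℝ :=
  sSup { r : ℝ | ∃ τ : Fin L → ℝ, (∀ ℓ, 0 ≤ τ ℓ) ∧ (∃ ℓ, 0 < τ ℓ) ∧ r = R1 α ρ nv ntv τ }

/-- `max_{ñ ∈ Δ_N} sup_{τ ∈ T} R₁(n ∣ ñ; τ)`. -/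
noncomputable def worst1 {L : ℕ} (N : ℕ) (α : Fin L → ℝ) (ρ : ℝ) (nv : Fin L → ℕ) : ℝ :=
  sSup { w : ℝ | ∃ ntv ∈ Delta L N, w = supTau1 α ρ nv ntv }

lemma key_id {c x y : ℝ} (hx : 0 < x) (hy : 0 < y) :
    (y / x) ^ c * y ^ (-c) = x ^ (-c) := by
  rw [Real.div_rpow hy.le hx.le, Real.rpow_neg hy.le, Real.rpow_neg hx.le]
  have h1 : y ^ c ≠ 0 := (Real.rpow_pos_of_pos hy c).ne'
  have h2 : x ^ c ≠ 0 := (Real.rpow_pos_of_pos hx c).ne'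
  field_simp

lemma ratio_rpow {c x y : ℝ} (hx : 0 < x) (hy : 0 < y) :
    x ^ (-c) / y ^ (-c) = (y / x) ^ c := by
  rw [div_eq_iff (Real.rpow_pos_of_pos hy (-c)).ne']
  exact (key_id hx hy).symm

lemma supTau1_isGreatest {L : ℕ} (α : Fin L → ℝ) (hα : ∀ ℓ, 0 < α ℓ) {ρ : ℝ} (hρ : 0 < ρ)
    (nv ntv : Fin L → ℕ) (hnv : ∀ ℓ, 1 ≤ nv ℓ) (hntv : ∀ ℓ, 1 ≤ ntv ℓ)
    (ℓ0 : Fin L) (hmax : ∀ ℓ, (ntv ℓ : ℝ) / (nv ℓ : ℝ) ≤ (ntv ℓ0 : ℝ) / (nv ℓ0 : ℝ)) :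
    IsGreatest { r : ℝ | ∃ τ : Fin L → ℝ, (∀ ℓ, 0 ≤ τ ℓ) ∧ (∃ ℓ, 0 < τ ℓ) ∧
        r = R1 α ρ nv ntv τ }
      (((ntv ℓ0 : ℝ) / (nv ℓ0 : ℝ)) ^ (ρ / 2)) := by
  have hnvR : ∀ ℓ, (0:ℝ) < (nv ℓ : ℝ) := fun ℓ => by exact_mod_cast (hnv ℓ)
  have hntvR : ∀ ℓ, (0:ℝ) < (ntv ℓ : ℝ) := fun ℓ => by exact_mod_cast (hntv ℓ)
  set M : ℝ := ((ntv ℓ0 : ℝ) / (nv ℓ0 : ℝ)) ^ (ρ / 2) with hM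
  have hM0 : 0 ≤ M := Real.rpow_nonneg (div_nonneg (hntvR ℓ0).le (hnvR ℓ0).le) _
  constructor
  · -- membership: indicator τ at ℓ0
    refine ⟨fun ℓ => if ℓ = ℓ0 then 1 else 0, fun ℓ => by positivity, ⟨ℓ0, by simp⟩, ?_⟩
    have hnum : ∀ (g : Fin L → ℝ),
        (∑ ℓ, α ℓ * ((if ℓ = ℓ0 then (1:ℝ) else 0)) ^ ((1:ℝ)/2) * g ℓ)
          = α ℓ0 * g ℓ0 := by
      intro g
      rw [Finset.sum_eq_single ℓ0]
      · simp [Real.one_rpow]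
      · intro b _ hb
        simp [hb, Real.zero_rpow (by norm_num : ((1:ℝ)/2) ≠ 0)]
      · simp
    unfold R1
    rw [hnum (fun ℓ => ((nv ℓ : ℝ)) ^ (-(ρ/2))), hnum (fun ℓ => ((ntv ℓ : ℝ)) ^ (-(ρ/2)))]
    rw [mul_div_mul_left _ _ (hα ℓ0).ne']
    exact (ratio_rpow (hnvR ℓ0) (hntvR ℓ0)).symm
  · -- upper bound
    rintro r ⟨τ, hτ0, ⟨ℓ1, hℓ1⟩, rfl⟩
    have hs0 : ∀ ℓ, 0 ≤ α ℓ * (τ ℓ) ^ ((1:ℝ)/2) :=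
      fun ℓ => mul_nonneg (hα ℓ).le (Real.rpow_nonneg (hτ0 ℓ) _)
    have hD : 0 < ∑ ℓ, α ℓ * (τ ℓ) ^ ((1:ℝ)/2) * ((ntv ℓ : ℝ)) ^ (-(ρ/2)) := by
      apply Finset.sum_pos'
      · intro ℓ _
        exact mul_nonneg (hs0 ℓ) (Real.rpow_nonneg (hntvR ℓ).le _)
      · exact ⟨ℓ1, Finset.mem_univ ℓ1,
          mul_pos (mul_pos (hα ℓ1) (Real.rpow_pos_of_pos hℓ1 _))
            (Real.rpow_pos_of_pos (hntvR ℓ1) _)⟩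
    have key : ∀ ℓ, ((nv ℓ : ℝ)) ^ (-(ρ/2)) ≤ M * ((ntv ℓ : ℝ)) ^ (-(ρ/2)) := by
      intro ℓ
      have h1 : ((ntv ℓ : ℝ) / (nv ℓ : ℝ)) ^ (ρ/2) ≤ M := by
        rw [hM]
        exact Real.rpow_le_rpow (div_nonneg (hntvR ℓ).le (hnvR ℓ).le) (hmax ℓ)
          (by positivity)
      calc ((nv ℓ : ℝ)) ^ (-(ρ/2))
          = ((ntv ℓ : ℝ) / (nv ℓ : ℝ)) ^ (ρ/2) * ((ntv ℓ : ℝ)) ^ (-(ρ/2)) :=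
            (key_id (hnvR ℓ) (hntvR ℓ)).symm
        _ ≤ M * ((ntv ℓ : ℝ)) ^ (-(ρ/2)) :=
            mul_le_mul_of_nonneg_right h1 (Real.rpow_nonneg (hntvR ℓ).le _)
    unfold R1
    rw [div_le_iff₀ hD, Finset.mul_sum]
    apply Finset.sum_le_sum
    intro ℓ _
    calc α ℓ * (τ ℓ) ^ ((1:ℝ)/2) * ((nv ℓ : ℝ)) ^ (-(ρ/2))
        ≤ α ℓ * (τ ℓ) ^ ((1:ℝ)/2) * (M * ((ntv ℓ : ℝ)) ^ (-(ρ/2))) :=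
          mul_le_mul_of_nonneg_left (key ℓ) (hs0 ℓ)
      _ = M * (α ℓ * (τ ℓ) ^ ((1:ℝ)/2) * ((ntv ℓ : ℝ)) ^ (-(ρ/2))) := by ring

lemma supTau1_eq {L : ℕ} (α : Fin L → ℝ) (hα : ∀ ℓ, 0 < α ℓ) {ρ : ℝ} (hρ : 0 < ρ)
    (nv ntv : Fin L → ℕ) (hnv : ∀ ℓ, 1 ≤ nv ℓ) (hntv : ∀ ℓ, 1 ≤ ntv ℓ)
    (ℓ0 : Fin L) (hmax : ∀ ℓ, (ntv ℓ : ℝ) / (nv ℓ : ℝ) ≤ (ntv ℓ0 : ℝ) / (nv ℓ0 : ℝ)) :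
    supTau1 α ρ nv ntv = ((ntv ℓ0 : ℝ) / (nv ℓ0 : ℝ)) ^ (ρ / 2) :=
  (supTau1_isGreatest α hα hρ nv ntv hnv hntv ℓ0 hmax).csSup_eq

lemma Delta_entry_le {L N : ℕ} {nv : Fin L → ℕ} (h : nv ∈ Delta L N) (ℓ : Fin L) :
    nv ℓ ≤ N - L + 1 := by
  obtain ⟨h1, h2⟩ := h
  have hsum : (Finset.univ.erase ℓ).card ≤ ∑ ℓ' ∈ Finset.univ.erase ℓ, nv ℓ' := by
    calc (Finset.univ.erase ℓ).card = ∑ ℓ' ∈ Finset.univ.erase ℓ, 1 := by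
          simp
      _ ≤ ∑ ℓ' ∈ Finset.univ.erase ℓ, nv ℓ' := Finset.sum_le_sum fun i _ => h1 i
  have hcard : (Finset.univ.erase ℓ).card = L - 1 := by
    rw [Finset.card_erase_of_mem (Finset.mem_univ ℓ)]
    simp
  have hadd : nv ℓ + ∑ ℓ' ∈ Finset.univ.erase ℓ, nv ℓ' = N := by
    rw [Finset.add_sum_erase _ _ (Finset.mem_univ ℓ)]
    exact h2
  have hL : 0 < L := Fin.pos ℓ
  omega

lemma Delta_min_le_div {L N : ℕ} (hL : 0 < L) {nv : Fin L → ℕ} (h : nv ∈ Delta L N)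
    (ℓm : Fin L) (hm : ∀ ℓ, nv ℓm ≤ nv ℓ) : nv ℓm ≤ N / L := by
  rw [Nat.le_div_iff_mul_le hL]
  calc nv ℓm * L = ∑ _ℓ : Fin L, nv ℓm := by simp [mul_comm]
    _ ≤ ∑ ℓ, nv ℓ := Finset.sum_le_sum fun i _ => hm i
    _ = N := h.2

lemma worst1_eq {L N : ℕ} (hL : 0 < L) (hLN : L ≤ N)
    (α : Fin L → ℝ) (hα : ∀ ℓ, 0 < α ℓ) {ρ : ℝ} (hρ : 0 < ρ)
    {nv : Fin L → ℕ} (hnv : nv ∈ Delta L N)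
    (ℓm : Fin L) (hm : ∀ ℓ, nv ℓm ≤ nv ℓ) :
    worst1 N α ρ nv = (((N - L + 1 : ℕ) : ℝ) / (nv ℓm : ℝ)) ^ (ρ / 2) := by
  have h1 := hnv.1
  have hnvR : ∀ ℓ, (0:ℝ) < (nv ℓ : ℝ) := fun ℓ => by exact_mod_cast (h1 ℓ)
  have hNL1 : 1 ≤ N - L + 1 := by omega
  apply IsGreatest.csSup_eq
  constructor
  · -- attained by ntv putting N - L + 1 at ℓm
    set ntv : Fin L → ℕ := fun ℓ => (if ℓ = ℓm then N - L else 0) + 1 with hntvdef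
    have hntv1 : ∀ ℓ, 1 ≤ ntv ℓ := fun ℓ => by simp [hntvdef]
    have hntvm : ntv ℓm = N - L + 1 := by simp [hntvdef]
    have hntvD : ntv ∈ Delta L N := by
      refine ⟨hntv1, ?_⟩
      have : ∑ ℓ, ntv ℓ = (∑ ℓ, if ℓ = ℓm then N - L else 0) + ∑ _ℓ : Fin L, 1 := by
        rw [hntvdef, ← Finset.sum_add_distrib]
      rw [this, Finset.sum_ite_eq' Finset.univ ℓm (fun _ => N - L)]
      simp
      omega
    refine ⟨ntv, hntvD, ?_⟩
    rw [supTau1_eq α hα hρ nv ntv h1 hntv1 ℓm ?_, hntvm]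
    intro ℓ
    by_cases hc : ℓ = ℓm
    · subst hc; exact le_rfl
    · have : ntv ℓ = 1 := by simp [hntvdef, hc]
      rw [this, hntvm]
      apply div_le_div₀ (by positivity) (by exact_mod_cast hNL1) (hnvR ℓm)
        (by exact_mod_cast hm ℓ)
  · -- upper bound
    rintro w ⟨ntv, hntvD, rfl⟩
    have hne : Nonempty (Fin L) := ⟨⟨0, hL⟩⟩
    obtain ⟨ℓ0, _, hmax⟩ := Finset.exists_max_image Finset.univ
      (fun ℓ => (ntv ℓ : ℝ) / (nv ℓ : ℝ)) Finset.univ_nonempty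
    rw [supTau1_eq α hα hρ nv ntv h1 hntvD.1 ℓ0 (fun ℓ => hmax ℓ (Finset.mem_univ ℓ))]
    apply Real.rpow_le_rpow (div_nonneg (by positivity) (hnvR ℓ0).le) ?_ (by positivity)
    apply div_le_div₀ (by positivity) ?_ (hnvR ℓm) (by exact_mod_cast hm ℓ0)
    exact_mod_cast Delta_entry_le hntvD ℓ0

theorem minimax_R1
    (L N : ℕ) (hL : 0 < L) (hLN : L ≤ N)
    (α : Fin L → ℝ) (hα : ∀ ℓ, 0 < α ℓ) (ρ : ℝ) (hρ : 0 < ρ) :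
    IsLeast { v : ℝ | ∃ nv ∈ Delta L N, v = worst1 N α ρ nv }
      ((((N - L + 1 : ℕ) : ℝ) / ((N / L : ℕ) : ℝ)) ^ (ρ / 2)) ∧
    (let nstar : Fin L → ℕ := fun ℓ => if (ℓ : ℕ) < N - L * (N / L) then N / L + 1 else N / L
     nstar ∈ Delta L N ∧
      worst1 N α ρ nstar = (((N - L + 1 : ℕ) : ℝ) / ((N / L : ℕ) : ℝ)) ^ (ρ / 2)) := by
  have hq1 : 1 ≤ N / L := (Nat.one_le_div_iff hL).mpr hLN
  have hmod := Nat.div_add_mod N L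
  have hmodlt : N % L < L := Nat.mod_lt _ hL
  set q := N / L with hqdef
  set m := N % L with hmdef
  have hr : N - L * q = m := by omega
  set nstar : Fin L → ℕ := fun ℓ => if (ℓ : ℕ) < N - L * q then q + 1 else q with hnstar
  have hns1 : ∀ ℓ, 1 ≤ nstar ℓ := by
    intro ℓ; rw [hnstar]; dsimp only; split <;> omega
  have hnsD : nstar ∈ Delta L N := by
    refine ⟨hns1, ?_⟩
    have heq : ∀ ℓ : Fin L, nstar ℓ = q + (if (ℓ : ℕ) < m then 1 else 0) := by
      intro ℓ; rw [hnstar, hr]; dsimp only; split <;> omega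
    rw [Finset.sum_congr rfl (fun ℓ _ => heq ℓ), Finset.sum_add_distrib]
    have hcount : (∑ ℓ : Fin L, if (ℓ : ℕ) < m then 1 else 0) = m := by
      rw [Fin.sum_univ_eq_sum_range (fun i => if i < m then 1 else 0) L,
        ← Finset.sum_filter]
      have : (Finset.range L).filter (fun i => i < m) = Finset.range m := by
        ext i; simp only [Finset.mem_filter, Finset.mem_range]; omega
      rw [this]
      simp
    rw [hcount]
    simp only [Finset.sum_const, Finset.card_univ, Fintype.card_fin, smul_eq_mul]
    omega
  have hℓm : ∃ ℓm : Fin L, nstar ℓm = q ∧ ∀ ℓ, nstar ℓm ≤ nstar ℓ := by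
    refine ⟨⟨L - 1, by omega⟩, ?_, ?_⟩
    · rw [hnstar]; dsimp only
      rw [if_neg]
      omega
    · intro ℓ
      rw [hnstar]; dsimp only
      rw [if_neg (by omega)]
      split <;> omega
  obtain ⟨ℓm, hℓmq, hℓmmin⟩ := hℓm
  have hworst : worst1 N α ρ nstar = (((N - L + 1 : ℕ) : ℝ) / ((q : ℕ) : ℝ)) ^ (ρ / 2) := by
    rw [worst1_eq hL hLN α hα hρ hnsD ℓm hℓmmin, hℓmq]
  refine ⟨⟨⟨nstar, hnsD, hworst.symm⟩, ?_⟩, hnsD, hworst⟩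
  rintro v ⟨nv, hnvD, rfl⟩
  have hne : Nonempty (Fin L) := ⟨⟨0, hL⟩⟩
  obtain ⟨ℓ1, _, hmin⟩ := Finset.exists_min_image Finset.univ nv Finset.univ_nonempty
  rw [worst1_eq hL hLN α hα hρ hnvD ℓ1 (fun ℓ => hmin ℓ (Finset.mem_univ ℓ))]
  have hle : nv ℓ1 ≤ q := Delta_min_le_div hL hnvD ℓ1 (fun ℓ => hmin ℓ (Finset.mem_univ ℓ))
  have hnv1 : (0:ℝ) < (nv ℓ1 : ℝ) := by exact_mod_cast hnvD.1 ℓ1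
  apply Real.rpow_le_rpow (by positivity) ?_ (by positivity)
  apply div_le_div_of_nonneg_left (by positivity) hnv1 (by exact_mod_cast hle)
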